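/- Let R_q = ℤ_q[X]/(Xⁿ+1) and R_p = ℤ_p[X]/(Xⁿ+1) with p dividing q (e.g., q and p powers of two with p < q). Given secret keys s₁,…,s_N ∈ R_q with s = Σᵢ sᵢ mod q, a public polynomial a ∈ R_q, errors eᵢ ∈ R_q, messages mᵢ ∈ R_q with coefficients lifted from R_p, and ciphertexts cᵢ = a·sᵢ + p̃·eᵢ + mᵢ mod q where p̃ is the constant polynomial p. If the coefficients of Σᵢ (p·eᵢ + mᵢ) (computed over ℤ with lifts in [0, q)) do not wrap modulo q, then ((Σᵢ cᵢ − a·s) mod q) mod p = (Σᵢ mᵢ) mod p. -/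

import Mathlib

/-!
The masks `a·sᵢ` cancel against `a·s`, leaving `Σᵢ (p·eᵢ + mᵢ)` in `R_q`. Coefficientwise this
is the image in `ℤ/qℤ` of the integer `p·Σᵢ eᵢ + Σᵢ mᵢ` (lifts in `[0, q)`), and no wraparound
means its canonical representative is that integer itself, whose residue mod `p` is `Σᵢ mᵢ mod p`.
-/

open Polynomial Finset

theorem sum_sub_mul_sum_eq_sum_of_eq_mul_add {ι R : Type*} [CommRing R] (u : Finset ι)
    (a : R) (s d c : ι → R) (hc : ∀ i, c i = a * s i + d i) :
    ∑ i ∈ u, c i - a * ∑ i ∈ u, s i = ∑ i ∈ u, d i := by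
  simp only [hc, sum_add_distrib, mul_sum, add_sub_cancel_left]

theorem AdjoinRoot.coeff_modByMonicHom_sum_natCast_mul_add {ι R : Type*} [CommRing R]
    {g : R[X]} (hg : g.Monic) (u : Finset ι) (p : ℕ) (e m : ι → AdjoinRoot g) (t : ℕ) :
    (modByMonicHom hg (∑ i ∈ u, ((p : AdjoinRoot g) * e i + m i))).coeff t
      = ∑ i ∈ u, ((p : R) * (modByMonicHom hg (e i)).coeff t
          + (modByMonicHom hg (m i)).coeff t) := by
  simp only [← nsmul_eq_mul, map_sum, map_add, map_nsmul, finsetSum_coeff, coeff_add,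
    coeff_smul]

theorem ZMod.val_sum_natCast_mul_add_of_lt {ι : Type*} {q : ℕ} [NeZero q] (u : Finset ι)
    (p : ℕ) (x y : ι → ZMod q) (h : ∑ i ∈ u, (p * (x i).val + (y i).val) < q) :
    (∑ i ∈ u, ((p : ZMod q) * x i + y i)).val = ∑ i ∈ u, (p * (x i).val + (y i).val) := by
  rw [← ZMod.val_cast_of_lt h]
  push_cast
  simp only [ZMod.natCast_zmod_val]

theorem eshe_decryption_correct_general (q p n N : ℕ)
    (hmonic : (X ^ n + 1 : Polynomial (ZMod q)).Monic)
    (a : AdjoinRoot (X ^ n + 1 : Polynomial (ZMod q)))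
    (s e m c : Fin N → AdjoinRoot (X ^ n + 1 : Polynomial (ZMod q)))
    (skey : AdjoinRoot (X ^ n + 1 : Polynomial (ZMod q)))
    (hs : skey = ∑ i, s i)
    (hc : ∀ i, c i = a * s i + (p : AdjoinRoot (X ^ n + 1 : Polynomial (ZMod q))) * e i + m i)
    (hnowrap : ∀ t : ℕ,
      (∑ i, (p * ((AdjoinRoot.modByMonicHom hmonic (e i)).coeff t).val
        + ((AdjoinRoot.modByMonicHom hmonic (m i)).coeff t).val)) < q) :
    ∀ t : ℕ,
      ((AdjoinRoot.modByMonicHom hmonic ((∑ i, c i) - a * skey)).coeff t).val % p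
        = (∑ i, ((AdjoinRoot.modByMonicHom hmonic (m i)).coeff t).val) % p := by
  intro t
  have : NeZero q := ⟨((Nat.zero_le _).trans_lt (hnowrap t)).ne'⟩
  rw [hs, sum_sub_mul_sum_eq_sum_of_eq_mul_add _ a s _ c fun i => (hc i).trans (add_assoc ..),
    AdjoinRoot.coeff_modByMonicHom_sum_natCast_mul_add,
    ZMod.val_sum_natCast_mul_add_of_lt _ _ _ _ (hnowrap t), sum_add_distrib, ← mul_sum,
    Nat.mul_add_mod]

/-- Decryption correctness of ESHE aggregation. In `R_q = (ℤ/qℤ)[X]/(Xⁿ+1)` with `p ∣ q`,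
given secret keys `sᵢ` with `s = Σᵢ sᵢ`, a public `a`, errors `eᵢ`, messages `mᵢ` whose
coefficients are lifted from `R_p` (i.e. have representatives `< p`), and ciphertexts
`cᵢ = a·sᵢ + p̃·eᵢ + mᵢ` (with `p̃` the constant polynomial `p`), if the coefficients of
`Σᵢ (p·eᵢ + mᵢ)` computed over `ℤ` via the lifts in `[0, q)` do not wrap modulo `q`, then
`((Σᵢ cᵢ − a·s) mod q) mod p = (Σᵢ mᵢ) mod p` coefficientwise. -/
theorem eshe_decryption_correct (q p n N : ℕ) (hq : 1 < q) (hp : 1 < p) (hpq : p ∣ q)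
    (hn : 0 < n) (hmonic : (X ^ n + 1 : Polynomial (ZMod q)).Monic)
    (a : AdjoinRoot (X ^ n + 1 : Polynomial (ZMod q)))
    (s e m c : Fin N → AdjoinRoot (X ^ n + 1 : Polynomial (ZMod q)))
    (skey : AdjoinRoot (X ^ n + 1 : Polynomial (ZMod q)))
    (hs : skey = ∑ i, s i)
    (hc : ∀ i, c i = a * s i + (p : AdjoinRoot (X ^ n + 1 : Polynomial (ZMod q))) * e i + m i)
    (hm : ∀ i t, ((AdjoinRoot.modByMonicHom hmonic (m i)).coeff t).val < p)
    (hnowrap : ∀ t : ℕ,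
      (∑ i, (p * ((AdjoinRoot.modByMonicHom hmonic (e i)).coeff t).val
        + ((AdjoinRoot.modByMonicHom hmonic (m i)).coeff t).val)) < q) :
    ∀ t : ℕ,
      ((AdjoinRoot.modByMonicHom hmonic ((∑ i, c i) - a * skey)).coeff t).val % p
        = (∑ i, ((AdjoinRoot.modByMonicHom hmonic (m i)).coeff t).val) % p :=
  eshe_decryption_correct_general q p n N hmonic a s e m c skey hs hc hnowrap
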